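/- arXiv:0907.5363 — 5 statements merged into one kernel-verified Lean document; each statement's English description precedes it below -/
import Mathlib

section
/- Let (X,d) and (X',d') be compact metric spaces, φ : X → X a continuous map, and h : X → X' a homeomorphism; set ψ = h ∘ φ ∘ h⁻¹ : X' → X'. Then C(ψ) = C(φ), C̲(ψ) = C̲(φ), and C*(ψ) = C*(φ); in particular the three complexity indices are invariants of topological conjugacy and do not depend on the choice of topologically equivalent metrics. -/
open Filter Set Metric
open scoped ENNReal Topology

/-- The dynamical distance of order `n` associated with the map `φ`:
`d_n^φ(x,y) = max_{0 ≤ k ≤ n-1} d(φ^k x, φ^k y)`. -/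
noncomputable def dynDist {X : Type*} [MetricSpace X] (φ : X → X) (n : ℕ) (x y : X) : ℝ :=
  ⨆ k : Fin n, dist (φ^[(k : ℕ)] x) (φ^[(k : ℕ)] y)

/-- The open `(n,ε)`-ball centered at `x` for the dynamical distance `d_n^φ`. -/
def dynBall {X : Type*} [MetricSpace X] (φ : X → X) (n : ℕ) (x : X) (ε : ℝ) : Set X :=
  {y | dynDist φ n x y < ε}

/-- `G_n(Y,ε)`: the minimal number of `(n,ε)`-balls (centers anywhere in `X`)
needed to cover `Y`. -/
noncomputable def coverNum {X : Type*} [MetricSpace X] (φ : X → X) (n : ℕ) (Y : Set X)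
    (ε : ℝ) : ℕ :=
  sInf {m : ℕ | ∃ t : Finset X, t.card = m ∧ Y ⊆ ⋃ x ∈ t, dynBall φ n x ε}

/-- The (upper) complexity index `C(φ,Y) = sup_{ε>0} limsup_n log G_n(Y,ε) / log n`. -/
noncomputable def upperComplexity {X : Type*} [MetricSpace X] (φ : X → X) (Y : Set X) : ℝ≥0∞ :=
  ⨆ (ε : ℝ) (_ : 0 < ε),
    Filter.limsup
      (fun n : ℕ => ENNReal.ofReal (Real.log (coverNum φ n Y ε) / Real.log n)) Filter.atTop

/-- The lower complexity index `C̲(φ,Y) = sup_{ε>0} liminf_n log G_n(Y,ε) / log n`. -/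
noncomputable def lowerComplexity {X : Type*} [MetricSpace X] (φ : X → X) (Y : Set X) : ℝ≥0∞ :=
  ⨆ (ε : ℝ) (_ : 0 < ε),
    Filter.liminf
      (fun n : ℕ => ENNReal.ofReal (Real.log (coverNum φ n Y ε) / Real.log n)) Filter.atTop

/-- The weight `M(C,s) = Σ_i (1/n_i)^s` of a (countable) family of dynamical balls, the
family being encoded as a set of pairs `(center, order)`. -/
noncomputable def coverWeight {X : Type*} [MetricSpace X] (s : ℝ) (S : Set (X × ℕ)) : ℝ≥0∞ :=
  ∑' p : S, ((p : X × ℕ).2 : ℝ≥0∞)⁻¹ ^ s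

/-- A covering of `Y` of order `≥ N` at scale `ε`: a countable family of `(n_i,ε)`-balls
with all `n_i ≥ N` whose union contains `Y`. -/
def IsDynCover {X : Type*} [MetricSpace X] (φ : X → X) (Y : Set X) (ε : ℝ) (N : ℕ)
    (S : Set (X × ℕ)) : Prop :=
  S.Countable ∧ (∀ p ∈ S, N ≤ p.2) ∧ Y ⊆ ⋃ p ∈ S, dynBall φ p.2 p.1 ε

/-- `δ(Y,ε,s,N)`: the infimum of the weights of coverings of `Y` of order `≥ N`. -/
noncomputable def dynDelta {X : Type*} [MetricSpace X] (φ : X → X) (Y : Set X) (ε s : ℝ)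
    (N : ℕ) : ℝ≥0∞ :=
  ⨅ (S : Set (X × ℕ)) (_ : IsDynCover φ Y ε N S), coverWeight s S

/-- `Δ(Y,ε,s) = sup_{N ≥ 1} δ(Y,ε,s,N)`. -/
noncomputable def dynDeltaSup {X : Type*} [MetricSpace X] (φ : X → X) (Y : Set X)
    (ε s : ℝ) : ℝ≥0∞ :=
  ⨆ (N : ℕ) (_ : 1 ≤ N), dynDelta φ Y ε s N

/-- The critical value `s_c(Y,ε) = inf {s ≥ 0 | Δ(Y,ε,s) = 0}`, as an element of `[0,∞]`
(with `inf ∅ = +∞`). -/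
noncomputable def critVal {X : Type*} [MetricSpace X] (φ : X → X) (Y : Set X) (ε : ℝ) : ℝ≥0∞ :=
  sInf {c : ℝ≥0∞ | ∃ s : ℝ, 0 ≤ s ∧ c = ENNReal.ofReal s ∧ dynDeltaSup φ Y ε s = 0}

/-- The weak complexity index `C*(φ,Y) = sup_{ε>0} s_c(Y,ε)`. -/
noncomputable def weakComplexity {X : Type*} [MetricSpace X] (φ : X → X) (Y : Set X) : ℝ≥0∞ :=
  ⨆ (ε : ℝ) (_ : 0 < ε), critVal φ Y ε

/-!
A uniformly continuous factor map `h` (with `h ∘ φ = ψ ∘ h`) sends every `(n,δ)`-ball of `φ`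
into an `(n,ε)`-ball of `ψ`, with `δ` depending on `ε` only. Pushing covers forward along a
surjective such `h` therefore increases neither their cardinality nor their weight, so all three
complexity indices of `ψ` are at most those of `φ`. A homeomorphism between compact spaces is a
uniformly continuous factor map in both directions.
-/

open Function

section Dynamics

variable {X X' : Type*} [MetricSpace X] [MetricSpace X']

theorem dynDist_lt_iff {φ : X → X} {n : ℕ} {x y : X} {δ : ℝ} (hδ : 0 < δ) :
    dynDist φ n x y < δ ↔ ∀ k < n, dist (φ^[k] x) (φ^[k] y) < δ := by
  rcases Nat.eq_zero_or_pos n with rfl | hn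
  · simp [dynDist, hδ]
  have : Nonempty (Fin n) := ⟨⟨0, hn⟩⟩
  obtain ⟨i, hi⟩ := exists_eq_ciSup_of_finite
    (f := fun k : Fin n => dist (φ^[(k : ℕ)] x) (φ^[(k : ℕ)] y))
  refine ⟨fun H k hk => ?_, fun H => ?_⟩
  · exact (le_ciSup (Set.finite_range _).bddAbove (⟨k, hk⟩ : Fin n)).trans_lt H
  · rw [dynDist, ← hi]
    exact H i i.isLt

theorem dynBall_mem_nhds {φ : X → X} (hφ : Continuous φ) (n : ℕ) (x : X) {δ : ℝ}
    (hδ : 0 < δ) : dynBall φ n x δ ∈ 𝓝 x := by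
  have hball : dynBall φ n x δ = ⋂ k : Fin n, φ^[(k : ℕ)] ⁻¹' ball (φ^[(k : ℕ)] x) δ := by
    ext y
    simp only [dynBall, mem_ofPred_eq, dynDist_lt_iff hδ, mem_iInter, mem_preimage, mem_ball,
      dist_comm (φ^[_] y)]
    exact ⟨fun H k => H k k.isLt, fun H k hk => H ⟨k, hk⟩⟩
  rw [hball, iInter_mem]
  exact fun k => (hφ.iterate k).continuousAt.preimage_mem_nhds (ball_mem_nhds _ hδ)

theorem IsCompact.exists_finset_subset_iUnion_dynBall {φ : X → X} (hφ : Continuous φ)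
    {Y : Set X} (hY : IsCompact Y) (n : ℕ) {δ : ℝ} (hδ : 0 < δ) :
    ∃ t : Finset X, Y ⊆ ⋃ x ∈ t, dynBall φ n x δ := by
  obtain ⟨t, -, ht⟩ := hY.elim_nhds_subcover _ fun x _ => dynBall_mem_nhds hφ n x hδ
  exact ⟨t, ht⟩

theorem Function.Semiconj.exists_mapsTo_dynBall {h : X → X'} {φ : X → X} {ψ : X' → X'}
    (hsc : Semiconj h φ ψ) (hh : UniformContinuous h) {ε : ℝ} (hε : 0 < ε) :
    ∃ δ > 0, ∀ n x, MapsTo h (dynBall φ n x δ) (dynBall ψ n (h x) ε) := by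
  obtain ⟨δ, hδ, hδε⟩ := Metric.uniformContinuous_iff.mp hh ε hε
  refine ⟨δ, hδ, fun n x y hy => ?_⟩
  simp only [dynBall, mem_ofPred_eq, dynDist_lt_iff hε, dynDist_lt_iff hδ] at hy ⊢
  intro k hk
  rw [← (hsc.iterate_right k).eq, ← (hsc.iterate_right k).eq]
  exact hδε (hy k hk)

end Dynamics

section Monotonicity

variable {X X' : Type*} [MetricSpace X] [MetricSpace X'] {h : X → X'} {φ : X → X}
  {ψ : X' → X'} {δ ε : ℝ}

theorem coverNum_image_le {n : ℕ} {Y : Set X}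
    (hball : ∀ x, MapsTo h (dynBall φ n x δ) (dynBall ψ n (h x) ε))
    (hY : ∃ t : Finset X, Y ⊆ ⋃ x ∈ t, dynBall φ n x δ) :
    coverNum ψ n (h '' Y) ε ≤ coverNum φ n Y δ := by
  classical
  obtain ⟨t, ht, hcov⟩ := Nat.sInf_mem (s := {m : ℕ | ∃ t : Finset X, t.card = m ∧
    Y ⊆ ⋃ x ∈ t, dynBall φ n x δ}) (by obtain ⟨t, ht⟩ := hY; exact ⟨t.card, t, rfl, ht⟩)
  have himage : h '' Y ⊆ ⋃ x' ∈ t.image h, dynBall ψ n x' ε := by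
    rintro _ ⟨y, hy, rfl⟩
    obtain ⟨x, hx, hxy⟩ := mem_iUnion₂.mp (hcov hy)
    exact mem_iUnion₂.mpr ⟨h x, Finset.mem_image_of_mem h hx, hball x hxy⟩
  calc coverNum ψ n (h '' Y) ε ≤ (t.image h).card := Nat.sInf_le ⟨_, rfl, himage⟩
    _ ≤ t.card := Finset.card_image_le
    _ = coverNum φ n Y δ := ht

theorem coverWeight_image_le (s : ℝ) (S : Set (X × ℕ)) :
    coverWeight s (Prod.map h id '' S) ≤ coverWeight s S :=
  ENNReal.tsum_le_tsum_comp_of_surjective imageFactorization_surjective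
    (fun p : Prod.map h id '' S => ((p : X' × ℕ).2 : ℝ≥0∞)⁻¹ ^ s)

theorem dynDelta_image_le {Y : Set X}
    (hball : ∀ n x, MapsTo h (dynBall φ n x δ) (dynBall ψ n (h x) ε)) (s : ℝ) (N : ℕ) :
    dynDelta ψ (h '' Y) ε s N ≤ dynDelta φ Y δ s N := by
  refine le_iInf₂ fun S ⟨hcount, horder, hcov⟩ => ?_
  have hcover : IsDynCover ψ (h '' Y) ε N (Prod.map h id '' S) := by
    refine ⟨hcount.image _, ?_, ?_⟩
    · rintro _ ⟨p, hp, rfl⟩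
      exact horder p hp
    · rintro _ ⟨y, hy, rfl⟩
      obtain ⟨p, hp, hyp⟩ := mem_iUnion₂.mp (hcov hy)
      exact mem_iUnion₂.mpr ⟨Prod.map h id p, mem_image_of_mem _ hp, hball p.2 p.1 hyp⟩
  exact (iInf₂_le _ hcover).trans (coverWeight_image_le s S)

theorem critVal_le_of_dynDeltaSup_le {Y : Set X} {Y' : Set X'}
    (H : ∀ s, dynDeltaSup ψ Y' ε s ≤ dynDeltaSup φ Y δ s) :
    critVal ψ Y' ε ≤ critVal φ Y δ := by
  refine sInf_le_sInf ?_
  rintro _ ⟨s, hs, rfl, hΔ⟩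
  exact ⟨s, hs, rfl, le_antisymm (hΔ ▸ H s) zero_le⟩

theorem ofReal_log_div_log_le {a b : ℕ} (hab : a ≤ b) (n : ℕ) :
    ENNReal.ofReal (Real.log a / Real.log n) ≤ ENNReal.ofReal (Real.log b / Real.log n) := by
  refine ENNReal.ofReal_le_ofReal (div_le_div_of_nonneg_right ?_ (Real.log_natCast_nonneg n))
  rcases Nat.eq_zero_or_pos a with rfl | ha
  · simpa using Real.log_natCast_nonneg b
  · exact Real.log_le_log (by exact_mod_cast ha) (by exact_mod_cast hab)

variable {Y : Set X} {Y' : Set X'}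

theorem upperComplexity_le_of_coverNum_le
    (H : ∀ ε > 0, ∃ δ > 0, ∀ n, coverNum ψ n Y' ε ≤ coverNum φ n Y δ) :
    upperComplexity ψ Y' ≤ upperComplexity φ Y := by
  refine iSup₂_le fun ε hε => ?_
  obtain ⟨δ, hδ, hle⟩ := H ε hε
  refine le_trans ?_ (le_iSup₂ (f := fun δ (_ : 0 < δ) => limsup
    (fun n : ℕ => ENNReal.ofReal (Real.log (coverNum φ n Y δ) / Real.log n)) atTop) δ hδ)
  exact limsup_le_limsup (.of_forall fun n => ofReal_log_div_log_le (hle n) n)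

theorem lowerComplexity_le_of_coverNum_le
    (H : ∀ ε > 0, ∃ δ > 0, ∀ n, coverNum ψ n Y' ε ≤ coverNum φ n Y δ) :
    lowerComplexity ψ Y' ≤ lowerComplexity φ Y := by
  refine iSup₂_le fun ε hε => ?_
  obtain ⟨δ, hδ, hle⟩ := H ε hε
  refine le_trans ?_ (le_iSup₂ (f := fun δ (_ : 0 < δ) => liminf
    (fun n : ℕ => ENNReal.ofReal (Real.log (coverNum φ n Y δ) / Real.log n)) atTop) δ hδ)
  exact liminf_le_liminf (.of_forall fun n => ofReal_log_div_log_le (hle n) n)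

theorem weakComplexity_le_of_critVal_le
    (H : ∀ ε > 0, ∃ δ > 0, critVal ψ Y' ε ≤ critVal φ Y δ) :
    weakComplexity ψ Y' ≤ weakComplexity φ Y := by
  refine iSup₂_le fun ε hε => ?_
  obtain ⟨δ, hδ, hle⟩ := H ε hε
  exact hle.trans (le_iSup₂ (f := fun δ (_ : 0 < δ) => critVal φ Y δ) δ hδ)

end Monotonicity

namespace Function.Semiconj

variable {X X' : Type*} [MetricSpace X] [MetricSpace X'] {h : X → X'} {φ : X → X}
  {ψ : X' → X'}

theorem coverNum_le [CompactSpace X] (hsc : Semiconj h φ ψ) (hφ : Continuous φ)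
    (hh : UniformContinuous h) (hsurj : Surjective h) :
    ∀ ε > 0, ∃ δ > 0, ∀ n, coverNum ψ n univ ε ≤ coverNum φ n univ δ := by
  intro ε hε
  obtain ⟨δ, hδ, hball⟩ := hsc.exists_mapsTo_dynBall hh hε
  refine ⟨δ, hδ, fun n => ?_⟩
  rw [← image_univ_of_surjective hsurj]
  exact coverNum_image_le (hball n) (isCompact_univ.exists_finset_subset_iUnion_dynBall hφ n hδ)

theorem upperComplexity_le [CompactSpace X] (hsc : Semiconj h φ ψ) (hφ : Continuous φ)
    (hh : UniformContinuous h) (hsurj : Surjective h) :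
    upperComplexity ψ univ ≤ upperComplexity φ univ :=
  upperComplexity_le_of_coverNum_le (hsc.coverNum_le hφ hh hsurj)

theorem lowerComplexity_le [CompactSpace X] (hsc : Semiconj h φ ψ) (hφ : Continuous φ)
    (hh : UniformContinuous h) (hsurj : Surjective h) :
    lowerComplexity ψ univ ≤ lowerComplexity φ univ :=
  lowerComplexity_le_of_coverNum_le (hsc.coverNum_le hφ hh hsurj)

theorem weakComplexity_le (hsc : Semiconj h φ ψ) (hh : UniformContinuous h)
    (hsurj : Surjective h) : weakComplexity ψ univ ≤ weakComplexity φ univ := by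
  refine weakComplexity_le_of_critVal_le fun ε hε => ?_
  obtain ⟨δ, hδ, hball⟩ := hsc.exists_mapsTo_dynBall hh hε
  refine ⟨δ, hδ, critVal_le_of_dynDeltaSup_le fun s => iSup₂_le fun N hN => ?_⟩
  calc dynDelta ψ univ ε s N = dynDelta ψ (h '' univ) ε s N := by
        rw [image_univ_of_surjective hsurj]
    _ ≤ dynDelta φ univ δ s N := dynDelta_image_le hball s N
    _ ≤ dynDeltaSup φ univ δ s :=
        le_iSup₂ (f := fun N (_ : 1 ≤ N) => dynDelta φ univ δ s N) N hN

end Function.Semiconj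

/-- the complexity indices are invariants of topological conjugacy. -/
theorem complexity_conjugacy_invariant {X X' : Type*}
    [MetricSpace X] [CompactSpace X] [MetricSpace X'] [CompactSpace X']
    (φ : X → X) (hφ : Continuous φ) (h : X ≃ₜ X') :
    upperComplexity (fun x' => h (φ (h.symm x'))) Set.univ = upperComplexity φ Set.univ ∧
    lowerComplexity (fun x' => h (φ (h.symm x'))) Set.univ = lowerComplexity φ Set.univ ∧
    weakComplexity (fun x' => h (φ (h.symm x'))) Set.univ = weakComplexity φ Set.univ := by
  set ψ : X' → X' := fun x' => h (φ (h.symm x'))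
  have hψ : Continuous ψ := h.continuous.comp (hφ.comp h.symm.continuous)
  have hφψ : Semiconj h φ ψ := fun x => by simp [ψ]
  have hψφ : Semiconj h.symm ψ φ := fun x' => by simp [ψ]
  have hh := CompactSpace.uniformContinuous_of_continuous h.continuous
  have hh' := CompactSpace.uniformContinuous_of_continuous h.symm.continuous
  exact ⟨(hφψ.upperComplexity_le hφ hh h.surjective).antisymm
      (hψφ.upperComplexity_le hψ hh' h.symm.surjective),
    (hφψ.lowerComplexity_le hφ hh h.surjective).antisymm
      (hψφ.lowerComplexity_le hψ hh' h.symm.surjective),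
    (hφψ.weakComplexity_le hh h.surjective).antisymm
      (hψφ.weakComplexity_le hh' h.symm.surjective)⟩
end

section
/- Let (X,d) be a compact metric space and φ : X → X a continuous map. For any sequence (Y_m)_{m∈ℕ} of subsets of X one has C*(φ, ∪_{m∈ℕ} Y_m) = sup_{m∈ℕ} C*(φ, Y_m) (the σ-union property of the weak complexity index). -/
open Filter Set Metric
open scoped ENNReal Topology

/-!
Like an outer measure, `δ(·,ε,s,N)` is countably subadditive: gluing coverings of the `Y m`
whose weights exceed the infima by summable errors gives a covering of the union. Hence
`Δ(Y m,ε,s) = 0` for all `m` forces `Δ(⋃ m, Y m,ε,s) = 0`, so `s_c(⋃ m, Y m,ε) = sup_m s_c(Y m,ε)`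
for each `ε`, and `sup_ε` commutes with `sup_m`.
-/

section WeakComplexity

variable {X : Type*} [MetricSpace X] {φ : X → X}

lemma IsDynCover.mono {Y Z : Set X} {ε : ℝ} {N : ℕ} {S : Set (X × ℕ)}
    (hS : IsDynCover φ Z ε N S) (hYZ : Y ⊆ Z) : IsDynCover φ Y ε N S :=
  ⟨hS.1, hS.2.1, hYZ.trans hS.2.2⟩

lemma IsDynCover.iUnion {Y : ℕ → Set X} {ε : ℝ} {N : ℕ} {S : ℕ → Set (X × ℕ)}
    (hS : ∀ m, IsDynCover φ (Y m) ε N (S m)) : IsDynCover φ (⋃ m, Y m) ε N (⋃ m, S m) := by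
  refine ⟨countable_iUnion fun m => (hS m).1, ?_, ?_⟩
  · simp only [mem_iUnion, forall_exists_index]
    exact fun p m hp => (hS m).2.1 p hp
  · refine iUnion_subset fun m => (hS m).2.2.trans ?_
    exact biUnion_subset_biUnion_left (subset_iUnion S m)

lemma coverWeight_iUnion_le (s : ℝ) (S : ℕ → Set (X × ℕ)) :
    coverWeight s (⋃ m, S m) ≤ ∑' m, coverWeight s (S m) :=
  ENNReal.tsum_iUnion_le_tsum (fun p : X × ℕ => (p.2 : ℝ≥0∞)⁻¹ ^ s) S

lemma coverWeight_anti {s s' : ℝ} (hss' : s' ≤ s) {S : Set (X × ℕ)}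
    (hS : ∀ p ∈ S, 1 ≤ p.2) : coverWeight s S ≤ coverWeight s' S := by
  refine ENNReal.tsum_le_tsum fun p => ENNReal.rpow_le_rpow_of_exponent_ge ?_ hss'
  rw [ENNReal.inv_le_one]
  exact_mod_cast hS p p.2

lemma exists_isDynCover_coverWeight_lt {Y : Set X} {ε s : ℝ} {N : ℕ} {r : ℝ≥0∞}
    (h : dynDelta φ Y ε s N < r) : ∃ S, IsDynCover φ Y ε N S ∧ coverWeight s S < r := by
  simpa only [dynDelta, iInf_lt_iff, exists_prop] using h

lemma dynDelta_iUnion_le (Y : ℕ → Set X) (ε s : ℝ) (N : ℕ) :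
    dynDelta φ (⋃ m, Y m) ε s N ≤ ∑' m, dynDelta φ (Y m) ε s N := by
  refine ENNReal.le_of_forall_pos_le_add fun η hη hfin => ?_
  obtain ⟨η', hη'pos, hη'sum⟩ :=
    ENNReal.exists_pos_sum_of_countable (ENNReal.coe_ne_zero.mpr hη.ne') ℕ
  have hnear : ∀ m, dynDelta φ (Y m) ε s N < dynDelta φ (Y m) ε s N + η' m := fun m =>
    ENNReal.lt_add_right (ne_top_of_le_ne_top hfin.ne (ENNReal.le_tsum m))
      (ENNReal.coe_ne_zero.mpr (hη'pos m).ne')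
  choose S hScover hSweight using fun m => exists_isDynCover_coverWeight_lt (hnear m)
  calc dynDelta φ (⋃ m, Y m) ε s N ≤ coverWeight s (⋃ m, S m) :=
        iInf₂_le _ (IsDynCover.iUnion hScover)
    _ ≤ ∑' m, coverWeight s (S m) := coverWeight_iUnion_le s S
    _ ≤ ∑' m, (dynDelta φ (Y m) ε s N + η' m) := ENNReal.tsum_le_tsum fun m => (hSweight m).le
    _ = ∑' m, dynDelta φ (Y m) ε s N + ∑' m, (η' m : ℝ≥0∞) := ENNReal.tsum_add
    _ ≤ ∑' m, dynDelta φ (Y m) ε s N + η := by gcongr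

lemma dynDeltaSup_iUnion_le (Y : ℕ → Set X) (ε s : ℝ) :
    dynDeltaSup φ (⋃ m, Y m) ε s ≤ ∑' m, dynDeltaSup φ (Y m) ε s :=
  iSup₂_le fun N hN => (dynDelta_iUnion_le Y ε s N).trans <|
    ENNReal.tsum_le_tsum fun m => le_iSup₂ (f := fun N (_ : 1 ≤ N) => dynDelta φ (Y m) ε s N) N hN

lemma dynDeltaSup_eq_zero_of_le {Y : Set X} {ε s s' : ℝ} (hss' : s' ≤ s)
    (h : dynDeltaSup φ Y ε s' = 0) : dynDeltaSup φ Y ε s = 0 := by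
  refine nonpos_iff_eq_zero.mp (h ▸ iSup₂_mono fun N hN => le_iInf₂ fun S hS => ?_)
  exact (iInf₂_le S hS).trans (coverWeight_anti hss' fun p hp => hN.trans (hS.2.1 p hp))

lemma critVal_le_ofReal {Y : Set X} {ε s : ℝ} (hs : 0 ≤ s) (h : dynDeltaSup φ Y ε s = 0) :
    critVal φ Y ε ≤ ENNReal.ofReal s :=
  sInf_le ⟨s, hs, rfl, h⟩

lemma dynDeltaSup_eq_zero_of_critVal_lt {Y : Set X} {ε s : ℝ}
    (h : critVal φ Y ε < ENNReal.ofReal s) : dynDeltaSup φ Y ε s = 0 := by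
  obtain ⟨_, ⟨s', hs'0, rfl, hs'⟩, hlt⟩ := sInf_lt_iff.mp h
  exact dynDeltaSup_eq_zero_of_le ((ENNReal.ofReal_lt_ofReal_iff'.mp hlt).1.le) hs'

lemma critVal_mono {Y Z : Set X} (hYZ : Y ⊆ Z) (ε : ℝ) : critVal φ Y ε ≤ critVal φ Z ε := by
  refine sInf_le_sInf fun c ⟨s, hs, hc, hZ⟩ => ⟨s, hs, hc, ?_⟩
  refine nonpos_iff_eq_zero.mp (hZ ▸ iSup₂_mono fun N _ => ?_)
  exact le_iInf₂ fun S hS => iInf₂_le S (hS.mono hYZ)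

lemma critVal_iUnion (Y : ℕ → Set X) (ε : ℝ) :
    critVal φ (⋃ m, Y m) ε = ⨆ m, critVal φ (Y m) ε := by
  refine le_antisymm ?_ (iSup_le fun m => critVal_mono (subset_iUnion Y m) ε)
  refine le_of_forall_gt_imp_ge_of_dense fun c hc => ?_
  obtain ⟨s, hs, hsup, hsc⟩ := ENNReal.lt_iff_exists_real_btwn.mp hc
  have hzero : ∀ m, dynDeltaSup φ (Y m) ε s = 0 := fun m =>
    dynDeltaSup_eq_zero_of_critVal_lt ((le_iSup _ m).trans_lt hsup)
  have hzero_union : dynDeltaSup φ (⋃ m, Y m) ε s = 0 := by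
    simpa only [hzero, tsum_zero, nonpos_iff_eq_zero] using dynDeltaSup_iUnion_le (φ := φ) Y ε s
  exact (critVal_le_ofReal hs hzero_union).trans hsc.le

end WeakComplexity

theorem weakComplexity_iUnion_general {X : Type*} [MetricSpace X]
    (φ : X → X) (Y : ℕ → Set X) :
    weakComplexity φ (⋃ m, Y m) = ⨆ m, weakComplexity φ (Y m) := by
  simp only [weakComplexity, critVal_iUnion]
  rw [iSup_comm]
  exact iSup_congr fun ε => iSup_comm

/-- the σ-union property of the weak complexity index:
`C*(φ, ∪_m Y_m) = sup_m C*(φ, Y_m)`. -/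
theorem weakComplexity_iUnion {X : Type*} [MetricSpace X] [CompactSpace X]
    (φ : X → X) (hφ : Continuous φ) (Y : ℕ → Set X) :
    weakComplexity φ (⋃ m, Y m) = ⨆ m, weakComplexity φ (Y m) :=
  weakComplexity_iUnion_general φ Y
end

section
/- Let n ≥ 1, let K ⊆ ℝⁿ be compact, let ω : K → ℝⁿ be continuous, let 𝕋ⁿ = ℝⁿ/ℤⁿ carry the quotient of the sup metric, and equip 𝕋ⁿ × K with the product (max) metric. Define φ : 𝕋ⁿ × K → 𝕋ⁿ × K by φ(θ,r) = (θ + ω(r) mod ℤⁿ, r). Then the topological entropy of φ vanishes: h_top(φ) = sup_{ε>0} limsup_{n→∞} (1/n) log G_n(ε) = 0. -/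
open Filter Set Metric
open scoped ENNReal Topology

/-- The topological entropy `h_top(φ) = sup_{ε>0} limsup_n (1/n) log G_n(ε)`. -/
noncomputable def topEntropy {X : Type*} [MetricSpace X] (φ : X → X) : ℝ≥0∞ :=
  ⨆ (ε : ℝ) (_ : 0 < ε),
    Filter.limsup
      (fun n : ℕ => ENNReal.ofReal (Real.log (coverNum φ n Set.univ ε) / n)) Filter.atTop

/-!
The iterates are `φ^k(θ, r) = (θ + k ω(r), r)`, so two orbits stay `ε`-close during `N` steps
as soon as their angles are `ε/2`-close, their actions `ε`-close and their frequencies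
`ε/(4N)`-close. Cutting `K` into such cells takes `O(N^n)` pieces (a grid of mesh `ε/(4N)` on the
bounded set `ω(K)`), so `G_N(ε)` grows polynomially in `N` and `(1/N) log G_N(ε) → 0`.
-/

lemma tendsto_log_div_of_le_mul_pow {u : ℕ → ℕ} {A d : ℕ} (h : ∀ N ≥ 1, u N ≤ A * N ^ d) :
    Tendsto (fun N : ℕ => Real.log (u N) / N) atTop (𝓝 0) := by
  have hlog : ∀ N ≥ 1, Real.log (u N) ≤ Real.log (A + 1) + d * Real.log N := by
    intro N hN
    rcases (u N).eq_zero_or_pos with h0 | h0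
    · rw [h0, Nat.cast_zero, Real.log_zero]
      have := Real.log_natCast_nonneg N
      have : 0 ≤ Real.log ((A : ℝ) + 1) := Real.log_nonneg (by linarith [A.cast_nonneg (α := ℝ)])
      positivity
    calc Real.log (u N) ≤ Real.log ((A + 1) * N ^ d) := by
          refine Real.log_le_log (by exact_mod_cast h0) ?_
          calc (u N : ℝ) ≤ A * N ^ d := by exact_mod_cast h N hN
            _ ≤ (A + 1) * N ^ d := by gcongr; linarith
      _ = Real.log (A + 1) + d * Real.log N := by
          rw [Real.log_mul (by positivity) (by positivity), Real.log_pow]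
  have hbound : Tendsto (fun N : ℕ => (Real.log (A + 1) + d * Real.log N) / N) atTop (𝓝 0) := by
    have hlogN : Tendsto (fun N : ℕ => Real.log N / N) atTop (𝓝 0) :=
      Real.isLittleO_log_id_atTop.tendsto_div_nhds_zero.comp tendsto_natCast_atTop_atTop
    simpa [add_div, mul_div_assoc] using
      (tendsto_const_div_atTop_nhds_zero_nat (Real.log (A + 1))).add (hlogN.const_mul (d : ℝ))
  refine squeeze_zero' (Eventually.of_forall fun N => by positivity) ?_ hbound
  filter_upwards [eventually_ge_atTop 1] with N hN
  exact div_le_div_of_nonneg_right (hlog N hN) N.cast_nonneg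

section Dynamics

variable {X : Type*} [MetricSpace X] {φ : X → X}

lemma dynDist_le_of_forall_le {N : ℕ} {x y : X} {c : ℝ} (hc : 0 ≤ c)
    (h : ∀ k < N, dist (φ^[k] x) (φ^[k] y) ≤ c) : dynDist φ N x y ≤ c :=
  Real.iSup_le (fun k => h k k.2) hc

lemma coverNum_le_card {N : ℕ} {Y : Set X} {ε : ℝ} (t : Finset X)
    (ht : Y ⊆ ⋃ x ∈ t, dynBall φ N x ε) : coverNum φ N Y ε ≤ t.card :=
  Nat.sInf_le ⟨t, rfl, ht⟩

lemma coverNum_le_card_of_fibers {ι : Type*} {N : ℕ} {ε : ℝ} (g : X → ι) (s : Finset ι)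
    (hgs : ∀ x, g x ∈ s) (hg : ∀ x y, g x = g y → dynDist φ N x y < ε) :
    coverNum φ N univ ε ≤ s.card := by
  rcases isEmpty_or_nonempty X with hX | hX
  · exact (coverNum_le_card ∅ fun x _ => isEmptyElim x).trans (Nat.zero_le _)
  classical
  refine (coverNum_le_card (s.image (Function.invFun g)) fun y _ => ?_).trans
    Finset.card_image_le
  exact mem_iUnion₂.2
    ⟨_, Finset.mem_image_of_mem _ (hgs y), hg _ _ (Function.invFun_eq ⟨y, rfl⟩)⟩

lemma topEntropy_eq_zero_of_coverNum_le_mul_pow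
    (h : ∀ ε > 0, ∃ A d : ℕ, ∀ N ≥ 1, coverNum φ N univ ε ≤ A * N ^ d) : topEntropy φ = 0 := by
  refine le_antisymm (iSup₂_le fun ε hε => ?_) bot_le
  obtain ⟨A, d, hAd⟩ := h ε hε
  have := ENNReal.tendsto_ofReal (tendsto_log_div_of_le_mul_pow hAd)
  rw [ENNReal.ofReal_zero] at this
  exact this.limsup_eq.le

end Dynamics

lemma iterate_skewTranslation {G Y : Type*} [AddMonoid G] {a : Y → G} {φ : G × Y → G × Y}
    (hφ : ∀ p, φ p = (p.1 + a p.2, p.2)) (k : ℕ) (θ : G) (r : Y) :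
    φ^[k] (θ, r) = (θ + k • a r, r) := by
  induction k with
  | zero => simp
  | succ k ih => rw [Function.iterate_succ_apply', ih, hφ, succ_nsmul, add_assoc]

section SkewTranslation

variable {G Y : Type*} [NormedAddCommGroup G] [MetricSpace Y] {a : Y → G} {φ : G × Y → G × Y}

lemma dist_iterate_skewTranslation_le (hφ : ∀ p, φ p = (p.1 + a p.2, p.2)) (k : ℕ)
    (θ θ' : G) (r r' : Y) :
    dist (φ^[k] (θ, r)) (φ^[k] (θ', r')) ≤
      max (dist θ θ' + k * dist (a r) (a r')) (dist r r') := by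
  rw [iterate_skewTranslation hφ, iterate_skewTranslation hφ, Prod.dist_eq]
  refine max_le_max ((dist_add_add_le _ _ _ _).trans (add_le_add le_rfl ?_)) le_rfl
  simpa only [mem_closedBall, nsmul_eq_mul] using
    nsmul_mem_closedBall (n := k) (mem_closedBall.2 le_rfl : a r ∈ closedBall (a r') _)

lemma dynDist_skewTranslation_lt (hφ : ∀ p, φ p = (p.1 + a p.2, p.2)) {N : ℕ} {ε : ℝ}
    {θ θ' : G} {r r' : Y} (hθ : dist θ θ' + N * dist (a r) (a r') < ε) (hr : dist r r' < ε) :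
    dynDist φ N (θ, r) (θ', r') < ε := by
  refine (dynDist_le_of_forall_le (le_max_of_le_right dist_nonneg) fun k hk => ?_).trans_lt
    (max_lt hθ hr)
  refine (dist_iterate_skewTranslation_le hφ k θ θ' r r').trans (max_le_max ?_ le_rfl)
  gcongr

lemma coverNum_skewTranslation_le (hφ : ∀ p, φ p = (p.1 + a p.2, p.2)) {N : ℕ} {ε : ℝ}
    (tG : Finset G) (htG : ∀ θ, ∃ θ₀ ∈ tG, dist θ θ₀ < ε / 4) {ι : Type*} (g : Y → ι)
    (s : Finset ι) (hgs : ∀ r, g r ∈ s)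
    (hg : ∀ r r', g r = g r' → dist r r' < ε ∧ N * dist (a r) (a r') < ε / 2) :
    coverNum φ N univ ε ≤ tG.card * s.card := by
  choose c hctG hc using htG
  rw [← Finset.card_product]
  refine coverNum_le_card_of_fibers (fun p => (c p.1, g p.2)) _
    (fun p => Finset.mem_product.2 ⟨hctG _, hgs _⟩) ?_
  rintro ⟨θ, r⟩ ⟨θ', r'⟩ h
  obtain ⟨hcθ, hgr⟩ := Prod.mk.inj h
  obtain ⟨hr, ha⟩ := hg r r' hgr
  have hθ : dist θ θ' < ε / 2 := by
    have h₁ := hc θ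
    have h₂ : dist θ' (c θ) < ε / 4 := hcθ ▸ hc θ'
    linarith [dist_triangle_right θ θ' (c θ)]
  exact dynDist_skewTranslation_lt hφ (by linarith) hr

end SkewTranslation

lemma exists_finset_forall_dist_lt {X : Type*} [MetricSpace X] [CompactSpace X] {ε : ℝ}
    (hε : 0 < ε) : ∃ t : Finset X, ∀ x, ∃ y ∈ t, dist x y < ε := by
  obtain ⟨t, -, htf, hcov⟩ := finite_cover_balls_of_compact (isCompact_univ (X := X)) hε
  exact ⟨htf.toFinset, fun x => by simpa using hcov (mem_univ x)⟩

section Grid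

variable {ι : Type*} [Fintype ι]

lemma floor_mem_Icc_of_abs_le {x : ℝ} {L : ℕ} (h : |x| ≤ L) :
    ⌊x⌋ ∈ Finset.Icc (-(L : ℤ)) L := by
  obtain ⟨h₁, h₂⟩ := abs_le.1 h
  exact Finset.mem_Icc.2
    ⟨Int.le_floor.2 (by exact_mod_cast h₁), Int.floor_le_iff.2 (by push_cast; linarith)⟩

lemma card_piFinset_Icc [DecidableEq ι] (L : ℕ) :
    (Fintype.piFinset fun _ : ι => Finset.Icc (-(L : ℤ)) L).card =
      (2 * L + 1) ^ Fintype.card ι := by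
  simp only [Fintype.card_piFinset, Int.card_Icc, Finset.prod_const, Finset.card_univ]
  congr 1
  omega

lemma dist_lt_of_floor_div_eq {δ : ℝ} (hδ : 0 < δ) {v w : ι → ℝ}
    (h : ∀ i, ⌊v i / δ⌋ = ⌊w i / δ⌋) : dist v w < δ := by
  refine (dist_pi_lt_iff hδ).2 fun i => ?_
  have := Int.abs_sub_lt_one_of_floor_eq_floor (h i)
  rwa [← sub_div, abs_div, abs_of_pos hδ, div_lt_one hδ, ← Real.dist_eq] at this

end Grid

lemma exists_cells_of_isBounded_range {Y ι : Type*} [MetricSpace Y] [CompactSpace Y] [Fintype ι]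
    {ω : Y → ι → ℝ} (hω : Bornology.IsBounded (range ω)) {ε : ℝ} (hε : 0 < ε) :
    ∃ B : ℕ, ∀ N ≥ 1, ∃ (s : Finset (Y × (ι → ℤ))) (g : Y → Y × (ι → ℤ)),
      s.card ≤ B * N ^ Fintype.card ι ∧ (∀ r, g r ∈ s) ∧
      ∀ r r', g r = g r' → dist r r' < ε ∧ N * dist (ω r) (ω r') < ε / 2 := by
  classical
  obtain ⟨tY, htY⟩ := exists_finset_forall_dist_lt (X := Y) (half_pos hε)
  choose c hctY hc using htY
  obtain ⟨R, hR⟩ := hω.exists_norm_le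
  obtain ⟨L, hL⟩ := exists_nat_ge (4 * R / ε)
  refine ⟨tY.card * (2 * L + 1) ^ Fintype.card ι, fun N hN => ?_⟩
  have hN₀ : (0 : ℝ) < N := by exact_mod_cast hN
  set δ := ε / (4 * N) with hδ
  have hδ₀ : 0 < δ := by positivity
  refine ⟨tY ×ˢ Fintype.piFinset (fun _ => Finset.Icc (-((L * N : ℕ) : ℤ)) (L * N : ℕ)),
    fun r => (c r, fun i => ⌊ω r i / δ⌋), ?_, fun r => ?_, fun r r' h => ?_⟩
  · rw [Finset.card_product, card_piFinset_Icc, mul_assoc, ← mul_pow]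
    gcongr
    nlinarith
  · refine Finset.mem_product.2
      ⟨hctY r, Fintype.mem_piFinset.2 fun i => floor_mem_Icc_of_abs_le ?_⟩
    have hωr : |ω r i| ≤ R := (norm_le_pi_norm (ω r) i).trans (hR _ (mem_range_self r))
    rw [abs_div, abs_of_pos hδ₀, div_le_iff₀ hδ₀, hδ]
    calc |ω r i| ≤ 4 * R / ε * (ε / 4) := by field_simp; exact hωr
      _ ≤ L * (ε / 4) := by gcongr
      _ = ((L * N : ℕ) : ℝ) * (ε / (4 * N)) := by push_cast; field_simp
  · obtain ⟨hcr, hfloor⟩ := Prod.mk.inj h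
    have h₁ := hc r
    have h₂ : dist r' (c r) < ε / 2 := hcr ▸ hc r'
    refine ⟨by linarith [dist_triangle_right r r' (c r)], ?_⟩
    calc N * dist (ω r) (ω r') < N * δ :=
          mul_lt_mul_of_pos_left (dist_lt_of_floor_div_eq hδ₀ (congrFun hfloor)) hN₀
      _ < ε / 2 := by rw [hδ]; field_simp; linarith

lemma topEntropy_skewTranslation_eq_zero {G Y ι : Type*} [NormedAddCommGroup G] [CompactSpace G]
    [MetricSpace Y] [CompactSpace Y] [Fintype ι] {ω : Y → ι → ℝ}
    (hω : Bornology.IsBounded (range ω)) {f : (ι → ℝ) → G} (hf : LipschitzWith 1 f)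
    {φ : G × Y → G × Y} (hφ : ∀ p, φ p = (p.1 + f (ω p.2), p.2)) : topEntropy φ = 0 := by
  refine topEntropy_eq_zero_of_coverNum_le_mul_pow fun ε hε => ?_
  obtain ⟨tG, htG⟩ := exists_finset_forall_dist_lt (X := G) (by positivity : 0 < ε / 4)
  obtain ⟨B, hB⟩ := exists_cells_of_isBounded_range hω hε
  refine ⟨tG.card * B, Fintype.card ι, fun N hN => ?_⟩
  obtain ⟨s, g, hs, hgs, hg⟩ := hB N hN
  have hfω : ∀ r r', dist (f (ω r)) (f (ω r')) ≤ dist (ω r) (ω r') := fun r r' => by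
    simpa using hf.dist_le_mul (ω r) (ω r')
  calc coverNum φ N univ ε ≤ tG.card * s.card :=
        coverNum_skewTranslation_le (a := f ∘ ω) hφ tG htG g s hgs fun r r' h =>
          (hg r r' h).imp_right
            ((mul_le_mul_of_nonneg_left (hfω r r') N.cast_nonneg).trans_lt)
    _ ≤ tG.card * B * N ^ Fintype.card ι := by rw [mul_assoc]; gcongr

lemma lipschitzWith_one_coe_addCircle_pi {ι : Type*} [Fintype ι] (p : ℝ) :
    LipschitzWith 1 (fun (v : ι → ℝ) i => (v i : AddCircle p)) := by
  refine LipschitzWith.of_dist_le_mul fun v w => ?_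
  rw [NNReal.coe_one, one_mul]
  refine (dist_pi_le_iff dist_nonneg).2 fun i => ?_
  calc dist (v i : AddCircle p) (w i) = ‖((v i - w i : ℝ) : AddCircle p)‖ := by
        rw [dist_eq_norm, AddCircle.coe_sub]
    _ ≤ dist (v i) (w i) := (QuotientAddGroup.norm_mk_le_norm).trans_eq (dist_eq_norm _ _).symm
    _ ≤ dist v w := dist_le_pi_dist v w i

theorem actionAngle_entropy_zero_general (n : ℕ) (K : Set (Fin n → ℝ))
    (hK : IsCompact K) (ω : K → (Fin n → ℝ)) (hω : Continuous ω)
    (φ : (Fin n → AddCircle (1:ℝ)) × K → (Fin n → AddCircle (1:ℝ)) × K)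
    (hφ : ∀ p, φ p = ((fun i => p.1 i + (↑(ω p.2 i) : AddCircle (1:ℝ))), p.2)) :
    topEntropy φ = 0 := by
  have : CompactSpace K := isCompact_iff_compactSpace.mp hK
  exact topEntropy_skewTranslation_eq_zero (isCompact_range hω).isBounded
    (lipschitzWith_one_coe_addCircle_pi 1) hφ

/-- the topological entropy of the map
`φ(θ,r) = (θ + ω(r) mod ℤⁿ, r)` on `𝕋ⁿ × K` vanishes, for any compact `K ⊆ ℝⁿ` and any
continuous `ω : K → ℝⁿ`. -/
theorem actionAngle_entropy_zero (n : ℕ) (hn : 1 ≤ n) (K : Set (Fin n → ℝ))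
    (hK : IsCompact K) (ω : K → (Fin n → ℝ)) (hω : Continuous ω)
    (φ : (Fin n → AddCircle (1:ℝ)) × K → (Fin n → AddCircle (1:ℝ)) × K)
    (hφ : ∀ p, φ p = ((fun i => p.1 i + (↑(ω p.2 i) : AddCircle (1:ℝ))), p.2)) :
    topEntropy φ = 0 :=
  actionAngle_entropy_zero_general n K hK ω hω φ hφ
end

section
/- Let (X,d) be a compact metric space and Φ : [0,+∞) × X → X a continuous semi-flow (Φ⁰ = id and Φˢ ∘ Φᵗ = Φ^{s+t} for all s,t ≥ 0), and let φ = Φ¹ be its time-one map. Then the continuous weak complexity index equals the discrete one: C*_c(Φ) = C*(φ). -/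
open Filter Set Metric
open scoped ENNReal NNReal Topology

/-- The continuous-time dynamical distance `d_t^Φ(x,y) = sup_{0 ≤ τ ≤ t-1} d(Φ^τ x, Φ^τ y)`
associated with a semi-flow `Φ : [0,∞) × X → X`. -/
noncomputable def flowDist {X : Type*} [MetricSpace X] (Φ : ℝ≥0 × X → X) (t : ℝ)
    (x y : X) : ℝ :=
  ⨆ τ : {τ : ℝ≥0 // (τ : ℝ) ≤ t - 1}, dist (Φ (τ.1, x)) (Φ (τ.1, y))

/-- The open ball of radius `ε` centered at `x` for the distance `d_t^Φ`. -/
def flowBall {X : Type*} [MetricSpace X] (Φ : ℝ≥0 × X → X) (t : ℝ) (x : X) (ε : ℝ) :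
    Set X :=
  {y | flowDist Φ t x y < ε}

/-- The weight `M(C,s) = Σ_i (1/τ_i)^s` of a countable family of flow balls, encoded as a
set of pairs `(center, order)`. -/
noncomputable def flowCoverWeight {X : Type*} [MetricSpace X] (s : ℝ)
    (S : Set (X × ℝ)) : ℝ≥0∞ :=
  ∑' p : S, (ENNReal.ofReal (p : X × ℝ).2)⁻¹ ^ s

/-- A covering of `X` of order `≥ t` at scale `ε` by flow balls. -/
def IsFlowCover {X : Type*} [MetricSpace X] (Φ : ℝ≥0 × X → X) (ε t : ℝ)
    (S : Set (X × ℝ)) : Prop :=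
  S.Countable ∧ (∀ p ∈ S, t ≤ p.2) ∧ Set.univ ⊆ ⋃ p ∈ S, flowBall Φ p.2 p.1 ε

/-- `δ^Φ(ε,s,t)`: the infimum of the weights of coverings of `X` of order `≥ t`. -/
noncomputable def flowDelta {X : Type*} [MetricSpace X] (Φ : ℝ≥0 × X → X)
    (ε s t : ℝ) : ℝ≥0∞ :=
  ⨅ (S : Set (X × ℝ)) (_ : IsFlowCover Φ ε t S), flowCoverWeight s S

/-- `Δ^Φ(ε,s) = sup_{t ≥ 1} δ^Φ(ε,s,t)`. -/
noncomputable def flowDeltaSup {X : Type*} [MetricSpace X] (Φ : ℝ≥0 × X → X)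
    (ε s : ℝ) : ℝ≥0∞ :=
  ⨆ (t : ℝ) (_ : 1 ≤ t), flowDelta Φ ε s t

/-- The critical value `s_c^Φ(ε) = inf {s ≥ 0 | Δ^Φ(ε,s) = 0}` (with `inf ∅ = +∞`). -/
noncomputable def flowCritVal {X : Type*} [MetricSpace X] (Φ : ℝ≥0 × X → X)
    (ε : ℝ) : ℝ≥0∞ :=
  sInf {c : ℝ≥0∞ | ∃ s : ℝ, 0 ≤ s ∧ c = ENNReal.ofReal s ∧ flowDeltaSup Φ ε s = 0}

/-- The continuous weak complexity index `C*_c(Φ) = sup_{ε>0} s_c^Φ(ε)`. -/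
noncomputable def flowWeakComplexity {X : Type*} [MetricSpace X]
    (Φ : ℝ≥0 × X → X) : ℝ≥0∞ :=
  ⨆ (ε : ℝ) (_ : 0 < ε), flowCritVal Φ ε

/-!
Writing `φ = Φ¹`, the iterates `φᵏ` are the integer times `Φᵏ` of the flow, and every time
`τ ≤ n - 1` splits as `τ = σ + k` with `k = ⌊τ⌋ < n` and `σ ∈ [0,1]`. Hence a flow ball of order
`t ≥ 1` lies in the `φ`-ball of order `⌊t⌋` of the same radius, and, by uniform continuity of `Φ`
on `[0,1] × X`, an `(n,δ)`-ball of `φ` lies in the flow ball of order `n` and radius `ε`. Passing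
between orders `t` and `⌊t⌋ ≥ t/2` changes each weight `(1/t)^s` by a factor at most `2^s`, so
`Δ^Φ(ε,s)` vanishes exactly when the discrete `Δ` does, up to the change of scale `ε ↔ δ`.
-/

theorem dist_iterate_le_dynDist {X : Type*} [MetricSpace X] (φ : X → X) {n k : ℕ} (hk : k < n)
    (x y : X) : dist (φ^[k] x) (φ^[k] y) ≤ dynDist φ n x y :=
  le_ciSup (f := fun i : Fin n => dist (φ^[(i : ℕ)] x) (φ^[(i : ℕ)] y)) (finite_range _).bddAbove
    ⟨k, hk⟩

theorem iterate_timeOne_apply {X : Type*} {Φ : ℝ≥0 × X → X} (hid : ∀ x, Φ (0, x) = x)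
    (hsemi : ∀ (s t : ℝ≥0) (x : X), Φ (s, Φ (t, x)) = Φ (s + t, x)) (k : ℕ) (x : X) :
    (fun x => Φ (1, x))^[k] x = Φ (k, x) := by
  induction k with
  | zero => simp [hid]
  | succ k ih => rw [Function.iterate_succ_apply', ih, hsemi, add_comm]; push_cast; rfl

section Semiflow

variable {X : Type*} [MetricSpace X] {Φ : ℝ≥0 × X → X}

theorem dynDist_timeOne_le_flowDist [CompactSpace X] (hid : ∀ x, Φ (0, x) = x)
    (hsemi : ∀ (s t : ℝ≥0) (x : X), Φ (s, Φ (t, x)) = Φ (s + t, x))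
    {n : ℕ} {t : ℝ} (hnt : (n : ℝ) ≤ t) (x y : X) :
    dynDist (fun x => Φ (1, x)) n x y ≤ flowDist Φ t x y := by
  have hbdd : BddAbove (range fun τ : {τ : ℝ≥0 // (τ : ℝ) ≤ t - 1} =>
      dist (Φ (τ.1, x)) (Φ (τ.1, y))) :=
    ⟨diam univ, by
      rintro _ ⟨τ, rfl⟩
      exact dist_le_diam_of_mem isCompact_univ.isBounded (mem_univ _) (mem_univ _)⟩
  refine Real.iSup_le (fun k => ?_) (Real.iSup_nonneg fun _ => dist_nonneg)
  have hk : ((k : ℕ) : ℝ) ≤ t - 1 := by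
    have : ((k : ℕ) : ℝ) + 1 ≤ n := by exact_mod_cast k.2
    linarith
  rw [iterate_timeOne_apply hid hsemi, iterate_timeOne_apply hid hsemi]
  exact le_ciSup hbdd ⟨(k : ℕ), hk⟩

theorem flowBall_subset_dynBall_timeOne [CompactSpace X] (hid : ∀ x, Φ (0, x) = x)
    (hsemi : ∀ (s t : ℝ≥0) (x : X), Φ (s, Φ (t, x)) = Φ (s + t, x))
    {n : ℕ} {t : ℝ} (hnt : (n : ℝ) ≤ t) (x : X) (ε : ℝ) :
    flowBall Φ t x ε ⊆ dynBall (fun x => Φ (1, x)) n x ε := fun y hy =>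
  (dynDist_timeOne_le_flowDist hid hsemi hnt x y).trans_lt hy

theorem flowDist_le_of_dynDist_timeOne_lt (hid : ∀ x, Φ (0, x) = x)
    (hsemi : ∀ (s t : ℝ≥0) (x : X), Φ (s, Φ (t, x)) = Φ (s + t, x)) {δ η : ℝ} (hη : 0 ≤ η)
    (hδ : ∀ σ : ℝ≥0, σ ≤ 1 → ∀ x y : X, dist x y < δ → dist (Φ (σ, x)) (Φ (σ, y)) ≤ η)
    {n : ℕ} {x y : X} (hxy : dynDist (fun x => Φ (1, x)) n x y < δ) :
    flowDist Φ n x y ≤ η := by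
  refine Real.iSup_le (fun ⟨τ, hτ⟩ => ?_) hη
  set k := ⌊τ⌋₊
  have hkτ : (k : ℝ≥0) ≤ τ := Nat.floor_le τ.2
  have hkn : k < n := by
    have : (k : ℝ) ≤ τ := by exact_mod_cast hkτ
    exact_mod_cast (show (k : ℝ) < n by linarith)
  have hσ : τ - k ≤ 1 := tsub_le_iff_left.mpr (Nat.lt_floor_add_one τ).le
  have hsplit : ∀ z, Φ (τ, z) = Φ (τ - k, Φ (k, z)) := fun z => by
    rw [hsemi, tsub_add_cancel_of_le hkτ]
  have hk : dist (Φ (k, x)) (Φ (k, y)) < δ := by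
    rw [← iterate_timeOne_apply hid hsemi, ← iterate_timeOne_apply hid hsemi]
    exact (dist_iterate_le_dynDist _ hkn x y).trans_lt hxy
  show dist (Φ (τ, x)) (Φ (τ, y)) ≤ η
  rw [hsplit x, hsplit y]
  exact hδ _ hσ _ _ hk

theorem exists_pos_dist_flow_lt [CompactSpace X] (hΦ : Continuous Φ) {ε : ℝ} (hε : 0 < ε) :
    ∃ δ > 0, ∀ σ : ℝ≥0, σ ≤ 1 → ∀ x y : X, dist x y < δ → dist (Φ (σ, x)) (Φ (σ, y)) < ε := by
  have hunif := (isCompact_Icc.prod isCompact_univ).uniformContinuousOn_of_continuous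
    (s := Icc (0 : ℝ≥0) 1 ×ˢ (univ : Set X)) hΦ.continuousOn
  obtain ⟨δ, hδ, h⟩ := Metric.uniformContinuousOn_iff.mp hunif ε hε
  refine ⟨δ, hδ, fun σ hσ x y hxy => h (σ, x) ⟨⟨σ.2, hσ⟩, trivial⟩ (σ, y) ⟨⟨σ.2, hσ⟩, trivial⟩ ?_⟩
  simpa [Prod.dist_eq] using hxy

theorem exists_pos_dynBall_timeOne_subset_flowBall [CompactSpace X] (hΦ : Continuous Φ)
    (hid : ∀ x, Φ (0, x) = x)
    (hsemi : ∀ (s t : ℝ≥0) (x : X), Φ (s, Φ (t, x)) = Φ (s + t, x)) {ε : ℝ} (hε : 0 < ε) :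
    ∃ δ > 0, ∀ (n : ℕ) (x : X), dynBall (fun x => Φ (1, x)) n x δ ⊆ flowBall Φ n x ε := by
  obtain ⟨δ, hδ, hcont⟩ := exists_pos_dist_flow_lt hΦ (half_pos hε)
  refine ⟨δ, hδ, fun n x y hy => ?_⟩
  have hdist := flowDist_le_of_dynDist_timeOne_lt hid hsemi (half_pos hε).le
    (fun σ hσ x y hxy => (hcont σ hσ x y hxy).le) hy
  exact hdist.trans_lt (half_lt_self hε)

end Semiflow

section Covers

variable {X : Type*} [MetricSpace X] {Φ : ℝ≥0 × X → X} {φ : X → X}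

theorem flowDelta_mono {ε s t t' : ℝ} (h : t ≤ t') : flowDelta Φ ε s t ≤ flowDelta Φ ε s t' :=
  le_iInf₂ fun S hS => iInf₂_le S ⟨hS.1, fun p hp => h.trans (hS.2.1 p hp), hS.2.2⟩

theorem flowDelta_le_dynDelta {ε δ : ℝ}
    (hsub : ∀ (n : ℕ) (x : X), dynBall φ n x δ ⊆ flowBall Φ n x ε) (s : ℝ) (N : ℕ) :
    flowDelta Φ ε s N ≤ dynDelta φ univ δ s N := by
  refine le_iInf₂ fun S hS => ?_
  let f : X × ℕ → X × ℝ := fun p => (p.1, p.2)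
  have hf : f.Injective := fun p q h => Prod.ext (Prod.ext_iff.mp h).1
    (Nat.cast_injective (Prod.ext_iff.mp h).2)
  have hcov : IsFlowCover Φ ε N (f '' S) := by
    refine ⟨hS.1.image f, ?_, fun y _ => ?_⟩
    · rintro _ ⟨p, hp, rfl⟩
      exact (Nat.cast_le.mpr (hS.2.1 p hp) : (N : ℝ) ≤ p.2)
    · obtain ⟨p, hp, hy⟩ := mem_iUnion₂.mp (hS.2.2 (mem_univ y))
      exact mem_iUnion₂.mpr ⟨f p, mem_image_of_mem f hp, hsub p.2 p.1 hy⟩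
  calc flowDelta Φ ε s N ≤ flowCoverWeight s (f '' S) := iInf₂_le _ hcov
    _ = coverWeight s S := by
      rw [flowCoverWeight, tsum_image (fun q : X × ℝ => (ENNReal.ofReal q.2)⁻¹ ^ s) hf.injOn]
      simp [f, coverWeight]

theorem flowDeltaSup_le_dynDeltaSup {ε δ : ℝ}
    (hsub : ∀ (n : ℕ) (x : X), dynBall φ n x δ ⊆ flowBall Φ n x ε) (s : ℝ) :
    flowDeltaSup Φ ε s ≤ dynDeltaSup φ univ δ s := by
  refine iSup₂_le fun t ht => ?_
  calc flowDelta Φ ε s t ≤ flowDelta Φ ε s ⌈t⌉₊ := flowDelta_mono (Nat.le_ceil t)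
    _ ≤ dynDelta φ univ δ s ⌈t⌉₊ := flowDelta_le_dynDelta hsub s _
    _ ≤ dynDeltaSup φ univ δ s :=
      le_iSup₂_of_le ⌈t⌉₊ (Nat.one_le_ceil_iff.mpr (by linarith)) le_rfl

theorem inv_natFloor_le_two_mul_inv {τ : ℝ} (hτ : 1 ≤ τ) :
    ((⌊τ⌋₊ : ℝ≥0∞))⁻¹ ≤ 2 * (ENNReal.ofReal τ)⁻¹ := by
  have hfloor : (1 : ℝ) ≤ ⌊τ⌋₊ := by exact_mod_cast Nat.one_le_floor_iff τ |>.mpr hτ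
  have hτ2 : τ ≤ 2 * ⌊τ⌋₊ := by linarith [Nat.lt_floor_add_one τ]
  rw [← ENNReal.ofReal_natCast, ← ENNReal.ofReal_inv_of_pos (by linarith),
    ← ENNReal.ofReal_inv_of_pos (by linarith), ← ENNReal.ofReal_ofNat 2,
    ← ENNReal.ofReal_mul zero_le_two]
  refine ENNReal.ofReal_le_ofReal ?_
  rw [← div_eq_mul_inv, inv_le_comm₀ (by linarith) (by positivity), inv_div]
  linarith

theorem dynDelta_le_two_rpow_mul_flowDelta {ε s : ℝ} (hs : 0 ≤ s)
    (hsub : ∀ (n : ℕ) (t : ℝ) (x : X), (n : ℝ) ≤ t → flowBall Φ t x ε ⊆ dynBall φ n x ε)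
    {N : ℕ} (hN : 1 ≤ N) :
    dynDelta φ univ ε s N ≤ 2 ^ s * flowDelta Φ ε s N := by
  have h2 : (2 : ℝ≥0∞) ^ s ≠ 0 := by simp [ENNReal.rpow_eq_zero_iff]
  have h2' : (2 : ℝ≥0∞) ^ s ≠ ⊤ := by simp [ENNReal.rpow_eq_top_iff]
  simp_rw [flowDelta, ENNReal.mul_iInf_of_ne h2 h2']
  refine le_iInf₂ fun S hS => ?_
  have hge : ∀ p ∈ S, (1 : ℝ) ≤ p.2 := fun p hp =>
    le_trans (by exact_mod_cast hN) (hS.2.1 p hp)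
  let f : X × ℝ → X × ℕ := fun p => (p.1, ⌊p.2⌋₊)
  have hcov : IsDynCover φ univ ε N (f '' S) := by
    refine ⟨hS.1.image f, ?_, fun y _ => ?_⟩
    · rintro _ ⟨p, hp, rfl⟩
      exact Nat.le_floor (hS.2.1 p hp)
    · obtain ⟨p, hp, hy⟩ := mem_iUnion₂.mp (hS.2.2 (mem_univ y))
      exact mem_iUnion₂.mpr ⟨f p, mem_image_of_mem f hp,
        hsub _ p.2 p.1 (Nat.floor_le (by linarith [hge p hp])) hy⟩
  calc dynDelta φ univ ε s N ≤ coverWeight s (f '' S) := iInf₂_le _ hcov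
    _ ≤ ∑' p : S, ((⌊(p : X × ℝ).2⌋₊ : ℝ≥0∞))⁻¹ ^ s :=
      ENNReal.tsum_le_tsum_comp_of_surjective (imageFactorization_surjective (f := f) (s := S)) _
    _ ≤ ∑' p : S, 2 ^ s * (ENNReal.ofReal (p : X × ℝ).2)⁻¹ ^ s :=
      ENNReal.tsum_le_tsum fun p => (ENNReal.rpow_le_rpow (inv_natFloor_le_two_mul_inv
        (hge p p.2)) hs).trans_eq (ENNReal.mul_rpow_of_nonneg _ _ hs)
    _ = 2 ^ s * flowCoverWeight s S := ENNReal.tsum_mul_left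

theorem dynDeltaSup_le_two_rpow_mul_flowDeltaSup {ε s : ℝ} (hs : 0 ≤ s)
    (hsub : ∀ (n : ℕ) (t : ℝ) (x : X), (n : ℝ) ≤ t → flowBall Φ t x ε ⊆ dynBall φ n x ε) :
    dynDeltaSup φ univ ε s ≤ 2 ^ s * flowDeltaSup Φ ε s := by
  refine iSup₂_le fun N hN => (dynDelta_le_two_rpow_mul_flowDelta hs hsub hN).trans ?_
  gcongr
  exact le_iSup₂_of_le (N : ℝ) (by exact_mod_cast hN) le_rfl

theorem flowCritVal_le_critVal {ε δ : ℝ}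
    (h : ∀ s, 0 ≤ s → dynDeltaSup φ univ δ s = 0 → flowDeltaSup Φ ε s = 0) :
    flowCritVal Φ ε ≤ critVal φ univ δ :=
  sInf_le_sInf fun _ ⟨s, hs, hc, h0⟩ => ⟨s, hs, hc, h s hs h0⟩

theorem critVal_le_flowCritVal {ε δ : ℝ}
    (h : ∀ s, 0 ≤ s → flowDeltaSup Φ δ s = 0 → dynDeltaSup φ univ ε s = 0) :
    critVal φ univ ε ≤ flowCritVal Φ δ :=
  sInf_le_sInf fun _ ⟨s, hs, hc, h0⟩ => ⟨s, hs, hc, h s hs h0⟩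

end Covers

/-- for a continuous semi-flow `Φ` on a compact metric space with time-one
map `φ = Φ¹`, the continuous weak complexity index equals the discrete one:
`C*_c(Φ) = C*(φ)`. -/
theorem flowWeakComplexity_eq_weakComplexity {X : Type*} [MetricSpace X] [CompactSpace X]
    (Φ : ℝ≥0 × X → X) (hΦ : Continuous Φ)
    (hid : ∀ x, Φ (0, x) = x)
    (hsemi : ∀ (s t : ℝ≥0) (x : X), Φ (s, Φ (t, x)) = Φ (s + t, x)) :
    flowWeakComplexity Φ = weakComplexity (fun x => Φ (1, x)) Set.univ := by
  refine le_antisymm (iSup₂_le fun ε hε => ?_) (iSup₂_le fun ε hε => ?_)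
  · obtain ⟨δ, hδ, hsub⟩ := exists_pos_dynBall_timeOne_subset_flowBall hΦ hid hsemi hε
    refine le_iSup₂_of_le δ hδ (flowCritVal_le_critVal fun s _ h0 => ?_)
    exact le_antisymm (h0 ▸ flowDeltaSup_le_dynDeltaSup hsub s) zero_le
  · refine le_iSup₂_of_le ε hε (critVal_le_flowCritVal fun s hs h0 => ?_)
    have hle := dynDeltaSup_le_two_rpow_mul_flowDeltaSup hs
      fun n t x hnt => flowBall_subset_dynBall_timeOne hid hsemi hnt x ε
    rwa [h0, mul_zero, nonpos_iff_eq_zero] at hle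
end

section
/- There exist a compact metric space (X,d), a homeomorphism φ : X → X, and a sequence (Y_m)_{m∈ℕ} of subsets of X such that C(φ, ∪_{m∈ℕ} Y_m) > sup_{m∈ℕ} C(φ, Y_m) and C̲(φ, ∪_{m∈ℕ} Y_m) > sup_{m∈ℕ} C̲(φ, Y_m); consequently, the complexity indices C and C̲ do not enjoy the σ-union property. -/
open Filter Set Metric
open scoped ENNReal NNReal Topology

/-!
In the one-point compactification `ℤ ∪ {∞}` of the integers, with any compatible metric and the
shift `k ↦ k + 1`, every singleton has complexity `0`, since one `(n,ε)`-ball covers it. The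
negative integers, however, need at least `n` balls of order `n` at a fixed small scale: `0` is
isolated, and at time `i` the orbit of `-i` sits at `0` while that of `-j`, `j ≠ i`, does not, so
`-0, …, -(n-1)` are pairwise far apart in `d_n`. Hence the union has both indices at least `1`.
-/

namespace DynamicalComplexity

variable {X : Type*} [MetricSpace X] {φ : X → X}

noncomputable def complexityRatio (φ : X → X) (Y : Set X) (ε : ℝ) (n : ℕ) : ℝ≥0∞ :=
  ENNReal.ofReal (Real.log (coverNum φ n Y ε) / Real.log n)

theorem upperComplexity_eq (φ : X → X) (Y : Set X) :
    upperComplexity φ Y = ⨆ (ε : ℝ) (_ : 0 < ε), limsup (complexityRatio φ Y ε) atTop :=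
  rfl

theorem lowerComplexity_eq (φ : X → X) (Y : Set X) :
    lowerComplexity φ Y = ⨆ (ε : ℝ) (_ : 0 < ε), liminf (complexityRatio φ Y ε) atTop :=
  rfl

theorem lowerComplexity_le_upperComplexity (φ : X → X) (Y : Set X) :
    lowerComplexity φ Y ≤ upperComplexity φ Y :=
  iSup₂_mono fun _ _ => liminf_le_limsup

theorem dist_iterate_le_dynDist (x y : X) {n k : ℕ} (hk : k < n) :
    dist (φ^[k] x) (φ^[k] y) ≤ dynDist φ n x y :=
  le_ciSup (f := fun i : Fin n => dist (φ^[i] x) (φ^[i] y)) (finite_range _).bddAbove ⟨k, hk⟩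

theorem dynDist_le {n : ℕ} {x y : X} {c : ℝ} (hc : 0 ≤ c)
    (h : ∀ k < n, dist (φ^[k] x) (φ^[k] y) ≤ c) : dynDist φ n x y ≤ c :=
  Real.iSup_le (fun k => h k k.2) hc

theorem dynDist_nonneg (n : ℕ) (x y : X) : 0 ≤ dynDist φ n x y :=
  Real.iSup_nonneg fun _ => dist_nonneg

theorem dynDist_comm (n : ℕ) (x y : X) : dynDist φ n x y = dynDist φ n y x := by
  simp only [dynDist, dist_comm]

theorem dynDist_triangle (n : ℕ) (x y z : X) :
    dynDist φ n x z ≤ dynDist φ n x y + dynDist φ n y z :=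
  dynDist_le (add_nonneg (dynDist_nonneg n x y) (dynDist_nonneg n y z)) fun _ hk =>
    (dist_triangle _ _ _).trans
      (add_le_add (dist_iterate_le_dynDist x y hk) (dist_iterate_le_dynDist y z hk))

theorem mem_dynBall_self (n : ℕ) (x : X) {ε : ℝ} (hε : 0 < ε) : x ∈ dynBall φ n x ε := by
  simpa [dynBall, dynDist] using hε

theorem dynDist_lt_iff {n : ℕ} (hn : 0 < n) {x y : X} {ε : ℝ} :
    dynDist φ n x y < ε ↔ ∀ k < n, dist (φ^[k] x) (φ^[k] y) < ε := by
  have : Nonempty (Fin n) := ⟨⟨0, hn⟩⟩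
  obtain ⟨i, hi⟩ := exists_eq_ciSup_of_finite (f := fun i : Fin n => dist (φ^[i] x) (φ^[i] y))
  refine ⟨fun h k hk => (dist_iterate_le_dynDist x y hk).trans_lt h, fun h => ?_⟩
  rw [dynDist, ← hi]
  exact h i i.2

theorem isOpen_dynBall (hφ : Continuous φ) (n : ℕ) (x : X) (ε : ℝ) :
    IsOpen (dynBall φ n x ε) := by
  rcases n.eq_zero_or_pos with rfl | hn
  · simp [dynBall, dynDist, isOpen_const]
  have hball : dynBall φ n x ε = ⋂ k ∈ Iio n, φ^[k] ⁻¹' ball (φ^[k] x) ε := by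
    ext y
    simp [dynBall, dynDist_lt_iff hn, dist_comm]
  rw [hball]
  exact (finite_Iio n).isOpen_biInter fun k _ => isOpen_ball.preimage (hφ.iterate k)

theorem exists_finset_subset_iUnion_dynBall [CompactSpace X] (hφ : Continuous φ) (n : ℕ)
    (Y : Set X) {ε : ℝ} (hε : 0 < ε) : ∃ t : Finset X, Y ⊆ ⋃ x ∈ t, dynBall φ n x ε := by
  obtain ⟨t, ht⟩ := isCompact_univ.elim_finite_subcover (fun x => dynBall φ n x ε)
    (isOpen_dynBall hφ n · ε) fun x _ => mem_iUnion.2 ⟨x, mem_dynBall_self n x hε⟩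
  exact ⟨t, (subset_univ Y).trans ht⟩

theorem coverNum_singleton_le_one (n : ℕ) (p : X) {ε : ℝ} (hε : 0 < ε) :
    coverNum φ n {p} ε ≤ 1 :=
  Nat.sInf_le ⟨{p}, Finset.card_singleton p, by simpa using mem_dynBall_self (φ := φ) n p hε⟩

theorem complexityRatio_singleton (p : X) {ε : ℝ} (hε : 0 < ε) :
    complexityRatio φ {p} ε = 0 := by
  funext n
  have hlog : Real.log (coverNum φ n {p} ε) = 0 := by
    rcases Nat.le_one_iff_eq_zero_or_eq_one.mp (coverNum_singleton_le_one (φ := φ) n p hε)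
      with h | h <;> simp [h]
  simp [complexityRatio, hlog]

theorem upperComplexity_singleton (p : X) : upperComplexity φ {p} = 0 :=
  (upperComplexity_eq φ {p}).trans <| iSup₂_eq_bot.2 fun _ hε => by
    rw [complexityRatio_singleton p hε]
    exact limsup_const 0

theorem lowerComplexity_singleton (p : X) : lowerComplexity φ {p} = 0 :=
  le_antisymm ((lowerComplexity_le_upperComplexity φ {p}).trans_eq (upperComplexity_singleton p))
    bot_le

/-- Each `(n,ε)`-ball contains at most one point of a `2ε`-separated set for `d_n`. -/
theorem card_le_coverNum [CompactSpace X] (hφ : Continuous φ) {n : ℕ} {Y : Set X} {ε : ℝ}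
    (hε : 0 < ε) {s : Finset X} (hsY : ↑s ⊆ Y)
    (hs : (s : Set X).Pairwise fun a b => 2 * ε ≤ dynDist φ n a b) :
    s.card ≤ coverNum φ n Y ε := by
  obtain ⟨t₀, ht₀⟩ := exists_finset_subset_iUnion_dynBall hφ n Y hε
  refine le_csInf ⟨_, t₀, rfl, ht₀⟩ ?_
  rintro _ ⟨t, rfl, ht⟩
  have hcenter : ∀ a ∈ s, ∃ c ∈ t, a ∈ dynBall φ n c ε := fun a ha => by
    simpa using ht (hsY ha)
  choose! c hct hcball using hcenter
  refine Finset.card_le_card_of_injOn c hct fun a ha b hb hab => ?_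
  by_contra hne
  have hab' : dynDist φ n a b < 2 * ε := by
    calc dynDist φ n a b ≤ dynDist φ n (c a) a + dynDist φ n (c a) b := by
          rw [dynDist_comm n (c a) a]; exact dynDist_triangle n a (c a) b
      _ < ε + ε := add_lt_add (hcball a ha) (hab ▸ hcball b hb)
      _ = 2 * ε := by ring
  exact (hs ha hb hne).not_gt hab'

theorem one_le_complexityRatio {Y : Set X} {ε : ℝ} {n : ℕ} (hn : 2 ≤ n)
    (h : n ≤ coverNum φ n Y ε) : 1 ≤ complexityRatio φ Y ε n := by
  have hlog : 0 < Real.log n := Real.log_pos (by exact_mod_cast hn)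
  have hle : Real.log n ≤ Real.log (coverNum φ n Y ε) :=
    Real.log_le_log (by positivity) (by exact_mod_cast h)
  rw [complexityRatio, ← ENNReal.ofReal_one]
  exact ENNReal.ofReal_le_ofReal ((one_le_div hlog).2 hle)

theorem one_le_lowerComplexity {Y : Set X} {ε : ℝ} (hε : 0 < ε)
    (h : ∀ n, n ≤ coverNum φ n Y ε) : 1 ≤ lowerComplexity φ Y := by
  rw [lowerComplexity_eq]
  refine le_iSup₂_of_le ε hε (le_liminf_of_le (by isBoundedDefault) ?_)
  filter_upwards [eventually_ge_atTop 2] with n hn using one_le_complexityRatio hn (h n)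

end DynamicalComplexity

namespace IntegerShift

open OnePoint DynamicalComplexity

instance : TopologicalSpace.MetrizableSpace (OnePoint ℤ) :=
  ((Equiv.intEquivNat.toHomeomorphOfDiscrete).onePointCongr).isEmbedding.metrizableSpace

noncomputable instance : MetricSpace (OnePoint ℤ) :=
  TopologicalSpace.metrizableSpaceMetric (OnePoint ℤ)

def shift : OnePoint ℤ ≃ₜ OnePoint ℤ :=
  (Homeomorph.addRight 1).onePointCongr

theorem shift_iterate_coe (k : ℕ) (a : ℤ) : shift^[k] (a : OnePoint ℤ) = ↑(a + k) := by
  induction k generalizing a with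
  | zero => simp
  | succ k ih =>
    rw [Function.iterate_succ_apply', ih]
    simp [shift, add_assoc]

theorem exists_le_dist_coe_zero :
    ∃ δ > 0, ∀ a : ℤ, a ≠ 0 → δ ≤ dist (a : OnePoint ℤ) (0 : ℤ) := by
  obtain ⟨δ, hδ, hball⟩ := Metric.isOpen_iff.1
    (isOpen_image_coe.2 (isOpen_discrete {(0 : ℤ)})) _ ⟨0, rfl, rfl⟩
  refine ⟨δ, hδ, fun a ha => not_lt.1 fun hlt => ha ?_⟩
  simpa using hball hlt

theorem le_dynDist_shift {δ : ℝ} (hδ : ∀ a : ℤ, a ≠ 0 → δ ≤ dist (a : OnePoint ℤ) (0 : ℤ))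
    {n i j : ℕ} (hij : i < j) (hj : j < n) :
    δ ≤ dynDist shift n ((-i : ℤ) : OnePoint ℤ) ((-j : ℤ) : OnePoint ℤ) := by
  calc δ ≤ dist ((i - j : ℤ) : OnePoint ℤ) (0 : ℤ) := hδ _ (by omega)
    _ = dist (shift^[i] ((-i : ℤ) : OnePoint ℤ)) (shift^[i] ((-j : ℤ) : OnePoint ℤ)) := by
      rw [shift_iterate_coe, shift_iterate_coe, dist_comm]
      congr 2 <;> ring
    _ ≤ _ := dist_iterate_le_dynDist _ _ (hij.trans hj)

theorem le_coverNum_shift {δ : ℝ} (hδ₀ : 0 < δ)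
    (hδ : ∀ a : ℤ, a ≠ 0 → δ ≤ dist (a : OnePoint ℤ) (0 : ℤ)) (n : ℕ) :
    n ≤ coverNum shift n (⋃ m : ℕ, {((-m : ℤ) : OnePoint ℤ)}) (δ / 2) := by
  classical
  set s := (Finset.range n).image fun i : ℕ => ((-i : ℤ) : OnePoint ℤ)
  have hcard : s.card = n := by
    rw [Finset.card_image_of_injective _ fun i j h => by simpa using h, Finset.card_range]
  have hsY : ↑s ⊆ ⋃ m : ℕ, {((-m : ℤ) : OnePoint ℤ)} := by
    intro a ha
    obtain ⟨i, -, rfl⟩ := Finset.mem_image.1 ha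
    exact mem_iUnion.2 ⟨i, rfl⟩
  have hsep : (s : Set (OnePoint ℤ)).Pairwise fun a b => 2 * (δ / 2) ≤ dynDist shift n a b := by
    rintro _ ha _ hb hab
    obtain ⟨i, hi, rfl⟩ := Finset.mem_image.1 ha
    obtain ⟨j, hj, rfl⟩ := Finset.mem_image.1 hb
    rw [Finset.mem_range] at hi hj
    rw [mul_div_cancel₀ δ two_ne_zero]
    rcases lt_or_gt_of_ne (fun h : i = j => hab (h ▸ rfl)) with hij | hji
    · exact le_dynDist_shift hδ hij hj
    · exact (le_dynDist_shift hδ hji hi).trans_eq (dynDist_comm _ _ _)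
  simpa only [hcard] using card_le_coverNum shift.continuous (half_pos hδ₀) hsY hsep

end IntegerShift

open DynamicalComplexity IntegerShift

/-- the complexity indices `C` and `C̲` do not enjoy the σ-union property:
there are a compact metric space `X`, a homeomorphism `φ : X → X` and a sequence of
subsets `(Y_m)` with `C(φ, ∪_m Y_m) > sup_m C(φ, Y_m)` and
`C̲(φ, ∪_m Y_m) > sup_m C̲(φ, Y_m)`. -/
theorem complexity_no_sigma_union :
    ∃ (X : Type) (_ : MetricSpace X) (_ : CompactSpace X) (φ : X → X),
      IsHomeomorph φ ∧
      ∃ Y : ℕ → Set X,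
        (⨆ m, upperComplexity φ (Y m)) < upperComplexity φ (⋃ m, Y m) ∧
        (⨆ m, lowerComplexity φ (Y m)) < lowerComplexity φ (⋃ m, Y m) := by
  obtain ⟨δ, hδ₀, hδ⟩ := exists_le_dist_coe_zero
  have hlower : 1 ≤ lowerComplexity shift (⋃ m : ℕ, {((-m : ℤ) : OnePoint ℤ)}) :=
    one_le_lowerComplexity (half_pos hδ₀) (le_coverNum_shift hδ₀ hδ)
  refine ⟨OnePoint ℤ, inferInstance, inferInstance, shift, shift.isHomeomorph,
    fun m => {((-m : ℤ) : OnePoint ℤ)}, ?_, ?_⟩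
  · simp only [upperComplexity_singleton, iSup_const]
    exact zero_lt_one.trans_le (hlower.trans (lowerComplexity_le_upperComplexity _ _))
  · simp only [lowerComplexity_singleton, iSup_const]
    exact zero_lt_one.trans_le hlower
end
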